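/- arXiv:1604.02473 — 2 statements merged into one kernel-verified Lean document; each statement's English description precedes it below -/
import Mathlib

section
/- If u is an ultrafilter on ℚ that contains a bounded set and has a base of perfect sets, then there exist a real number r and an order-isomorphism or order anti-isomorphism f from a rational interval with endpoint r onto ℚ⁺ such that the image ultrafilter f(u) has a base of perfect unbounded subsets of ℚ⁺. -/
/-- A subset of a topological space is *crowded* if it has no isolated points. -/
def CrowdedIn {α : Type*} [TopologicalSpace α] (S : Set α) : Prop :=
  ∀ x ∈ S, x ∈ closure (S \ {x})

/-- The set of positive rationals. -/
def QposSet : Set ℚ := {q : ℚ | 0 < q}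

/-- `S` is closed in ℚ⁺ (with its subspace topology). -/
def ClosedInPos (S : Set ℚ) : Prop :=
  ∃ C : Set ℚ, IsClosed C ∧ S = C ∩ QposSet

/-!
A bounded ultrafilter `u` on ℚ converges to some real `r`, and since its base sets have no isolated
points it is not principal, so it lives on one side of `r`: it contains either a left interval
`(r - 1, r)` or the ray `(r, ∞)`. Either set is a countable dense linear order without endpoints,
hence order-isomorphic to ℚ⁺ by Cantor's theorem, and we choose the isomorphism (or
anti-isomorphism) sending the end at `r` to `+∞`. Order isomorphisms between order-connected
subsets of ℚ are homeomorphisms, so they carry perfect sets to relatively closed crowded sets, and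
`u` tending to `r` means its image tends to `+∞`, which makes every image set unbounded.
-/

open Set Filter Topology Function

theorem Topology.IsInducing.exists_isClosed_image_eq_inter_range {α β : Type*}
    [TopologicalSpace α] [TopologicalSpace β] {g : α → β} (hg : IsInducing g) {s : Set α}
    (hs : IsClosed s) : ∃ C, IsClosed C ∧ g '' s = C ∩ range g := by
  obtain ⟨C, hC, rfl⟩ := hg.isClosed_iff.1 hs
  exact ⟨C, hC, image_preimage_eq_inter_range⟩

theorem Topology.IsEmbedding.crowdedIn_image_iff {α β : Type*} [TopologicalSpace α]
    [TopologicalSpace β] {g : α → β} (hg : IsEmbedding g) {S : Set α} :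
    CrowdedIn (g '' S) ↔ CrowdedIn S := by
  have key : ∀ x, g x ∈ closure (g '' S \ {g x}) ↔ x ∈ closure (S \ {x}) := fun x => by
    rw [hg.isInducing.closure_eq_preimage_closure_image (S \ {x}), ← image_singleton,
      image_sdiff hg.injective]
    rfl
  simp only [CrowdedIn, forall_mem_image, key]

theorem crowdedIn_preimage_val_iff {α : Type*} [TopologicalSpace α] {I X : Set α} (hX : X ⊆ I) :
    CrowdedIn (Subtype.val ⁻¹' X : Set I) ↔ CrowdedIn X := by
  rw [← IsEmbedding.subtypeVal.crowdedIn_image_iff, Subtype.image_preimage_coe,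
    inter_eq_right.2 hX]

def Ultrafilter.HasPerfectBase {α : Type*} [TopologicalSpace α] (u : Ultrafilter α) : Prop :=
  ∀ A ∈ u, ∃ X ∈ u, X ⊆ A ∧ IsClosed X ∧ CrowdedIn X

namespace Ultrafilter.HasPerfectBase

variable {α β : Type*} [TopologicalSpace α] [TopologicalSpace β] {u : Ultrafilter α}

theorem not_subsingleton (hu : u.HasPerfectBase) {s : Set α} (hs : s ∈ u) : ¬ s.Subsingleton := by
  intro hsub
  obtain ⟨X, hXu, hXs, -, hXc⟩ := hu s hs
  obtain ⟨x, hx⟩ := u.nonempty_of_mem hXu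
  have hX : X \ {x} = ∅ := sdiff_eq_empty.2 fun y hy => hsub (hXs hy) (hXs hx)
  simpa [hX] using hXc x hx

theorem tendsto_nhdsNE (hu : u.HasPerfectBase) {φ : α → β} (hφ : Injective φ) {b : β}
    (h : Tendsto φ u (𝓝 b)) : Tendsto φ u (𝓝[≠] b) := by
  refine tendsto_nhdsWithin_iff.2 ⟨h, compl_mem_iff_notMem.2 fun hb => hu.not_subsingleton hb ?_⟩
  exact fun x hx y hy => hφ (hx.trans hy.symm)

theorem map_of_isEmbedding (hu : u.HasPerfectBase) {I : Set α} (hI : I ∈ u) {g : I → β}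
    (hg : IsEmbedding g) {f : α → β} (hfg : f ∘ Subtype.val = g) :
    ∀ A ∈ u.map f, ∃ X ∈ u.map f,
      X ⊆ A ∧ (∃ C, IsClosed C ∧ X = C ∩ range g) ∧ CrowdedIn X := by
  intro A hA
  obtain ⟨X, hXu, hXA, hXc, hXcr⟩ := hu _ (inter_mem (mem_map.1 hA) hI)
  have hXI : X ⊆ I := hXA.trans inter_subset_right
  have hfX : f '' X = g '' (Subtype.val ⁻¹' X) := by
    rw [← hfg, image_comp, Subtype.image_preimage_coe, inter_eq_right.2 hXI]
  obtain ⟨C, hC, hCX⟩ :=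
    hg.isInducing.exists_isClosed_image_eq_inter_range (hXc.preimage continuous_subtype_val)
  refine ⟨f '' X, mem_map.2 (mem_of_superset hXu (subset_preimage_image f X)),
    image_subset_iff.2 (hXA.trans inter_subset_left), ⟨C, hC, hfX.trans hCX⟩, ?_⟩
  rwa [hfX, hg.crowdedIn_image_iff, crowdedIn_preimage_val_iff hXI]

end Ultrafilter.HasPerfectBase

theorem Ultrafilter.tendsto_nhdsLT_or_nhdsGT {α β : Type*} [TopologicalSpace β] [LinearOrder β]
    {u : Ultrafilter α} {φ : α → β} {b : β} (h : Tendsto φ u (𝓝[≠] b)) :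
    Tendsto φ u (𝓝[<] b) ∨ Tendsto φ u (𝓝[>] b) := by
  rw [← nhdsLT_sup_nhdsGT] at h
  exact (u.map φ).le_sup_iff.1 h

theorem Ultrafilter.exists_tendsto_ratCast_nhds {u : Ultrafilter ℚ}
    (hbdd : ∃ A ∈ u, ∃ a b : ℚ, A ⊆ Icc a b) : ∃ r : ℝ, Tendsto ((↑) : ℚ → ℝ) u (𝓝 r) := by
  obtain ⟨A, hA, a, b, hAab⟩ := hbdd
  have hle : ↑(u.map ((↑) : ℚ → ℝ)) ≤ 𝓟 (Icc (a : ℝ) b) := by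
    refine le_principal_iff.2 (mem_map.2 (mem_of_superset hA fun q hq => ?_))
    exact ⟨Rat.cast_le.2 (hAab hq).1, Rat.cast_le.2 (hAab hq).2⟩
  obtain ⟨r, -, hr⟩ := isCompact_Icc.ultrafilter_le_nhds _ hle
  exact ⟨r, hr⟩

theorem comap_val_le_atTop_of_tendsto_nhdsLT {u : Filter ℚ} {r : ℝ}
    (h : Tendsto ((↑) : ℚ → ℝ) u (𝓝[<] r)) {I : Set ℚ} (hI : ∀ q ∈ I, (q : ℝ) < r) :
    comap ((↑) : I → ℚ) u ≤ atTop := by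
  refine tendsto_id'.1 (tendsto_atTop.2 fun x => ?_)
  filter_upwards [preimage_mem_comap (h (Ioo_mem_nhdsLT (hI x x.2)))] with y hy
  exact (Rat.cast_lt.1 hy.1).le

theorem comap_val_le_atBot_of_tendsto_nhdsGT {u : Filter ℚ} {r : ℝ}
    (h : Tendsto ((↑) : ℚ → ℝ) u (𝓝[>] r)) {I : Set ℚ} (hI : ∀ q ∈ I, r < (q : ℝ)) :
    comap ((↑) : I → ℚ) u ≤ atBot := by
  refine tendsto_id'.1 (tendsto_atBot.2 fun x => ?_)
  filter_upwards [preimage_mem_comap (h (Ioo_mem_nhdsGT (hI x x.2)))] with y hy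
  exact (Rat.cast_lt.1 hy.2).le

theorem noMinOrder_ratCast_preimage {U : Set ℝ} (hU : IsOpen U) :
    NoMinOrder (((↑) : ℚ → ℝ) ⁻¹' U) := by
  refine ⟨fun x => ?_⟩
  obtain ⟨l, hl, hlU⟩ := exists_Ioc_subset_of_mem_nhds (hU.mem_nhds x.2) (exists_lt _)
  obtain ⟨q, hlq, hqx⟩ := exists_rat_btwn hl
  exact ⟨⟨q, hlU ⟨hlq, hqx.le⟩⟩, Rat.cast_lt.1 hqx⟩

theorem noMaxOrder_ratCast_preimage {U : Set ℝ} (hU : IsOpen U) :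
    NoMaxOrder (((↑) : ℚ → ℝ) ⁻¹' U) := by
  refine ⟨fun x => ?_⟩
  obtain ⟨l, hl, hlU⟩ := exists_Ico_subset_of_mem_nhds (hU.mem_nhds x.2) (exists_gt _)
  obtain ⟨q, hxq, hql⟩ := exists_rat_btwn hl
  exact ⟨⟨q, hlU ⟨hxq.le, hql⟩⟩, Rat.cast_lt.1 hxq⟩

section CountableDenseOrder

variable (T : Type*) [LinearOrder T] [TopologicalSpace T] [OrderTopology T] [Countable T]
  [DenselyOrdered T] [NoMinOrder T] [NoMaxOrder T] [Nonempty T]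

theorem exists_isEmbedding_strictMono_range_qpos :
    ∃ g : T → ℚ, IsEmbedding g ∧ StrictMono g ∧ range g = QposSet ∧ Tendsto g atTop atTop := by
  obtain ⟨F⟩ := Order.iso_of_countable_dense T (Ioi (0 : ℚ))
  refine ⟨Subtype.val ∘ F, IsEmbedding.subtypeVal.comp F.toHomeomorph.isEmbedding,
    (Subtype.strictMono_coe _).comp F.strictMono, ?_, tendsto_Ioi_atTop.1 F.tendsto_atTop⟩
  rw [F.surjective.range_comp, Subtype.range_coe]
  rfl

theorem exists_isEmbedding_strictAnti_range_qpos :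
    ∃ g : T → ℚ, IsEmbedding g ∧ StrictAnti g ∧ range g = QposSet ∧ Tendsto g atBot atTop := by
  have : Countable Tᵒᵈ := ‹Countable T›
  obtain ⟨g, hg, hmono, hrange, htop⟩ := exists_isEmbedding_strictMono_range_qpos Tᵒᵈ
  exact ⟨g ∘ OrderDual.toDual, hg.comp IsEmbedding.id,
    hmono.comp_strictAnti fun _ _ h => OrderDual.toDual_lt_toDual.2 h,
    by rwa [OrderDual.toDual.surjective.range_comp], htop⟩

end CountableDenseOrder

section ExtendVal

variable {α β : Type*} {I : Set α} {g : I → β} {e : α → β}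

theorem bijOn_extend_val (hg : Injective g) : BijOn (extend Subtype.val g e) I (range g) := by
  refine ⟨fun x hx => ?_, fun x hx y hy hxy => ?_, ?_⟩
  · rw [extend_val_apply hx]
    exact mem_range_self _
  · rw [extend_val_apply hx, extend_val_apply hy] at hxy
    exact congrArg Subtype.val (hg hxy)
  · rintro _ ⟨x, rfl⟩
    exact ⟨x, x.2, extend_val_apply x.2⟩

theorem strictMonoOn_extend_val [Preorder α] [Preorder β] (hg : StrictMono g) :
    StrictMonoOn (extend Subtype.val g e) I := fun x hx y hy hxy => by
  rw [extend_val_apply hx, extend_val_apply hy]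
  exact hg hxy

theorem strictAntiOn_extend_val [Preorder α] [Preorder β] (hg : StrictAnti g) :
    StrictAntiOn (extend Subtype.val g e) I := fun x hx y hy hxy => by
  rw [extend_val_apply hx, extend_val_apply hy]
  exact hg hxy

end ExtendVal

theorem Ultrafilter.HasPerfectBase.exists_bijOn_qpos {u : Ultrafilter ℚ} (hu : u.HasPerfectBase)
    {U : Set ℝ} (hU : IsOpen U) (hUc : U.OrdConnected) (hI : ((↑) : ℚ → ℝ) ⁻¹' U ∈ u)
    (hend : Filter.comap Subtype.val u ≤ (atTop : Filter (((↑) : ℚ → ℝ) ⁻¹' U)) ∨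
      Filter.comap Subtype.val u ≤ (atBot : Filter (((↑) : ℚ → ℝ) ⁻¹' U))) :
    ∃ f : ℚ → ℚ, BijOn f (((↑) : ℚ → ℝ) ⁻¹' U) QposSet ∧
      (StrictMonoOn f (((↑) : ℚ → ℝ) ⁻¹' U) ∨ StrictAntiOn f (((↑) : ℚ → ℝ) ⁻¹' U)) ∧
      (∀ A ∈ u.map f, ∃ X ∈ u.map f,
        X ⊆ A ∧ X ⊆ QposSet ∧ ClosedInPos X ∧ CrowdedIn X ∧ ∀ b : ℚ, ∃ x ∈ X, b < x) := by
  set I := ((↑) : ℚ → ℝ) ⁻¹' U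
  have : I.OrdConnected := hUc.preimage_mono Rat.cast_mono
  have := noMinOrder_ratCast_preimage hU
  have := noMaxOrder_ratCast_preimage hU
  have : Nonempty I := (u.nonempty_of_mem hI).to_subtype
  obtain ⟨g, hg, hmono, hrange, htop⟩ : ∃ g : I → ℚ, IsEmbedding g ∧ (StrictMono g ∨ StrictAnti g) ∧
      range g = QposSet ∧ Tendsto g (Filter.comap Subtype.val u) atTop := by
    rcases hend with hend | hend
    · obtain ⟨g, hg, hmono, hrange, htop⟩ := exists_isEmbedding_strictMono_range_qpos I
      exact ⟨g, hg, .inl hmono, hrange, htop.mono_left hend⟩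
    · obtain ⟨g, hg, hanti, hrange, htop⟩ := exists_isEmbedding_strictAnti_range_qpos I
      exact ⟨g, hg, .inr hanti, hrange, htop.mono_left hend⟩
  set f := Function.extend Subtype.val g 0
  have hfg : f ∘ Subtype.val = g := extend_comp Subtype.val_injective g 0
  have htend : Tendsto f u atTop := by
    rwa [← tendsto_comap'_iff (by rwa [Subtype.range_coe]), hfg]
  refine ⟨f, hrange ▸ bijOn_extend_val hg.injective,
    hmono.imp strictMonoOn_extend_val strictAntiOn_extend_val, fun A hA => ?_⟩
  obtain ⟨X, hXu, hXA, ⟨C, hC, hXC⟩, hXc⟩ := hu.map_of_isEmbedding hI hg hfg A hA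
  rw [hrange] at hXC
  refine ⟨X, hXu, hXA, hXC ▸ inter_subset_right, ⟨C, hC, hXC⟩, hXc, fun b => ?_⟩
  exact (Filter.Eventually.and hXu (htend.eventually_gt_atTop b)).exists

/-- If an ultrafilter on ℚ contains a bounded set and has a base of perfect sets,
then there are a real `r` and an order-(anti-)isomorphism `f` from a rational
interval with endpoint `r` onto ℚ⁺ such that `f(u)` has a base of perfect
unbounded subsets of ℚ⁺. -/
theorem stmt4 (u : Ultrafilter ℚ)
    (hbdd : ∃ A ∈ u, ∃ a b : ℚ, A ⊆ Set.Icc a b)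
    (hbase : ∀ A ∈ u, ∃ X ∈ u, X ⊆ A ∧ IsClosed X ∧ CrowdedIn X) :
    ∃ (r : ℝ) (I : Set ℚ) (f : ℚ → ℚ),
      ((∃ a : ℝ, a < r ∧ I = {q : ℚ | a < (q : ℝ) ∧ (q : ℝ) < r}) ∨
        I = {q : ℚ | r < (q : ℝ)}) ∧
      I ∈ u ∧
      Set.BijOn f I QposSet ∧
      (StrictMonoOn f I ∨ StrictAntiOn f I) ∧
      (∀ A ∈ Ultrafilter.map f u, ∃ X ∈ Ultrafilter.map f u,
        X ⊆ A ∧ X ⊆ QposSet ∧ ClosedInPos X ∧ CrowdedIn X ∧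
          ∀ b : ℚ, ∃ x ∈ X, b < x) := by
  have hu : u.HasPerfectBase := hbase
  obtain ⟨r, hr⟩ := u.exists_tendsto_ratCast_nhds hbdd
  rcases u.tendsto_nhdsLT_or_nhdsGT (hu.tendsto_nhdsNE Rat.cast_injective hr) with hlt | hgt
  · have hI : ((↑) : ℚ → ℝ) ⁻¹' Ioo (r - 1) r ∈ u := hlt (Ioo_mem_nhdsLT (by linarith))
    obtain ⟨f, hf⟩ := hu.exists_bijOn_qpos isOpen_Ioo ordConnected_Ioo hI
      (.inl (comap_val_le_atTop_of_tendsto_nhdsLT hlt fun _ hq => hq.2))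
    exact ⟨r, _, f, .inl ⟨r - 1, by linarith, rfl⟩, hI, hf⟩
  · have hI : ((↑) : ℚ → ℝ) ⁻¹' Ioi r ∈ u := hgt self_mem_nhdsWithin
    obtain ⟨f, hf⟩ := hu.exists_bijOn_qpos isOpen_Ioi ordConnected_Ioi hI
      (.inr (comap_val_le_atBot_of_tendsto_nhdsGT hgt fun _ hq => hq))
    exact ⟨r, _, f, .inr rfl, hI, hf⟩
end

section
/- The cardinal invariant 𝔯_P is at least the reaping number 𝔯: every reaping family for 𝒫(ℚ)/(scattered×fin) built from perfect sets yields, by intersecting with a countable clopen basis, a reaping family of the same cardinality for 𝒫(ω)/fin. Hence 𝔯 ≤ 𝔯_P. -/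
/-- `S` is two-sided crowded: every point of `S` is a two-sided limit of points of `S`. -/
def TwoSidedCrowded (S : Set ℚ) : Prop :=
  ∀ x ∈ S, ∀ ε : ℚ, 0 < ε →
    (∃ y ∈ S, x - ε < y ∧ y < x) ∧ (∃ z ∈ S, x < z ∧ z < x + ε)

/-- `S` is unbounded above. -/
def UnbAbove (S : Set ℚ) : Prop := ∀ b : ℚ, ∃ x ∈ S, b < x

/-- The family ℬ of unbounded two-sided perfect subsets of ℚ⁺. -/
def Bfam : Set (Set ℚ) :=
  {S | S ⊆ QposSet ∧ ClosedInPos S ∧ TwoSidedCrowded S ∧ UnbAbove S}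

/-- Membership in the coideal 𝒫′ generated by ℬ. -/
def MemPprime (A : Set ℚ) : Prop := ∃ B ∈ Bfam, B ⊆ A

/-- The cardinal invariant 𝔯_P: the least size of a family of unbounded
two-sided perfect subsets of ℚ⁺ reaping every `A ⊆ ℚ⁺` modulo 𝒫′. -/
noncomputable def rP : Cardinal :=
  sInf {c : Cardinal | ∃ 𝒳 : Set (Set ℚ), Cardinal.mk 𝒳 = c ∧ 𝒳 ⊆ Bfam ∧
    ∀ A : Set ℚ, ∃ X ∈ 𝒳, ¬ MemPprime (X \ A) ∨ ¬ MemPprime (X ∩ A)}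

/-- The reaping number 𝔯. -/
noncomputable def reapNumber : Cardinal :=
  sInf {c : Cardinal | ∃ R : Set (Set ℕ), Cardinal.mk R = c ∧
    (∀ A ∈ R, A.Infinite) ∧
    ∀ Y : Set ℕ, ∃ A ∈ R, (A \ Y).Finite ∨ (A ∩ Y).Finite}

/-! Cut ℚ⁺ into the blocks `(n√2, (n+1)√2)`. Their endpoints are irrational, so every union of
blocks is clopen in ℚ⁺, and its intersection with some `X ∈ ℬ` is again in `ℬ` as soon as `X`
meets infinitely many of its blocks. Hence if `X` reaps the union of the blocks indexed by
`Y ⊆ ℕ`, the set of indices of the blocks met by `X` reaps `Y`, and a reaping family for 𝔯_P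
yields one for 𝔯 of no larger size. -/

open Set Filter Topology

lemma ClosedInPos.inter_isClosed {X C : Set ℚ} (hX : ClosedInPos X) (hC : IsClosed C) :
    ClosedInPos (X ∩ C) := by
  obtain ⟨C', hC', rfl⟩ := hX
  exact ⟨C' ∩ C, hC'.inter hC, inter_right_comm C' QposSet C⟩

lemma twoSidedCrowded_univ : TwoSidedCrowded univ := fun x _ ε hε =>
  ⟨⟨x - ε / 2, trivial, by linarith, by linarith⟩, ⟨x + ε / 2, trivial, by linarith, by linarith⟩⟩

lemma TwoSidedCrowded.inter_isOpen {X U : Set ℚ} (hX : TwoSidedCrowded X) (hU : IsOpen U) :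
    TwoSidedCrowded (X ∩ U) := by
  rintro x ⟨hxX, hxU⟩ ε hε
  obtain ⟨l, u, ⟨hlx, hxu⟩, hIoo⟩ := mem_nhds_iff_exists_Ioo_subset.1 (hU.mem_nhds hxU)
  set δ := min ε (min (x - l) (u - x))
  have hδ : 0 < δ := lt_min hε (lt_min (by linarith) (by linarith))
  have hδε : δ ≤ ε := min_le_left _ _
  have hδl : δ ≤ x - l := (min_le_right _ _).trans (min_le_left _ _)
  have hδu : δ ≤ u - x := (min_le_right _ _).trans (min_le_right _ _)
  obtain ⟨⟨y, hyX, hy₁, hy₂⟩, ⟨z, hzX, hz₁, hz₂⟩⟩ := hX x hxX δ hδ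
  exact ⟨⟨y, ⟨hyX, hIoo ⟨by linarith, by linarith⟩⟩, by linarith, hy₂⟩,
    ⟨z, ⟨hzX, hIoo ⟨by linarith, by linarith⟩⟩, hz₁, by linarith⟩⟩

lemma QposSet_mem_Bfam : QposSet ∈ Bfam := by
  refine ⟨subset_rfl, ⟨univ, isClosed_univ, (univ_inter _).symm⟩, ?_, fun b => ?_⟩
  · have h := twoSidedCrowded_univ.inter_isOpen (isOpen_Ioi (a := (0 : ℚ)))
    rwa [univ_inter] at h
  · exact ⟨max b 0 + 1, by simp only [QposSet, mem_ofPred_eq]; positivity,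
      (le_max_left b 0).trans_lt (lt_add_one _)⟩

lemma not_memPprime_empty : ¬ MemPprime ∅ := by
  rintro ⟨B, hB, hBempty⟩
  obtain ⟨x, hx, -⟩ := hB.2.2.2 0
  exact hBempty hx

lemma MemPprime.mono {A A' : Set ℚ} (hA : MemPprime A) (h : A ⊆ A') : MemPprime A' :=
  let ⟨B, hB, hBA⟩ := hA
  ⟨B, hB, hBA.trans h⟩

lemma Bfam_reaps (A : Set ℚ) : ∃ X ∈ Bfam, ¬ MemPprime (X \ A) ∨ ¬ MemPprime (X ∩ A) := by
  by_cases hA : MemPprime A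
  · obtain ⟨B, hB, hBA⟩ := hA
    exact ⟨B, hB, .inl (sdiff_eq_empty.2 hBA ▸ not_memPprime_empty)⟩
  · exact ⟨QposSet, QposSet_mem_Bfam, .inr fun h => hA (h.mono inter_subset_right)⟩

noncomputable def blockIdx (q : ℚ) : ℕ := ⌊(q : ℝ) / √2⌋₊

def blockSet (S : Set ℕ) : Set ℚ := {q | 0 < q ∧ blockIdx q ∈ S}

lemma blockIdx_mul_sqrt_two_le {q : ℚ} (hq : 0 < q) : (blockIdx q : ℝ) * √2 ≤ q := by
  have hq' : (0 : ℝ) ≤ q := by exact_mod_cast hq.le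
  exact (le_div_iff₀ (by positivity)).1 (Nat.floor_le (by positivity))

lemma le_blockIdx {q : ℚ} {n : ℕ} (h : (n : ℝ) * √2 ≤ q) : n ≤ blockIdx q :=
  Nat.le_floor ((le_div_iff₀ (by positivity)).2 h)

lemma blockIdx_eventually_eq {q : ℚ} (hq : 0 < q) : ∀ᶠ p in 𝓝 q, blockIdx p = blockIdx q := by
  have hlo : (blockIdx q : ℝ) < q / √2 :=
    (Nat.floor_le (by positivity)).lt_of_ne
      ((irrational_sqrt_two.ratCast_div hq.ne').ne_nat _).symm
  have hcont : Continuous fun p : ℚ => (p : ℝ) / √2 := by fun_prop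
  filter_upwards [hcont.continuousAt.eventually (Ioo_mem_nhds hlo (Nat.lt_floor_add_one _))]
    with p hp
  exact (Nat.floor_eq_iff (by linarith [hp.1, (blockIdx q).cast_nonneg (α := ℝ)])).2
    ⟨hp.1.le, hp.2⟩

lemma isOpen_blockSet (S : Set ℕ) : IsOpen (blockSet S) := by
  refine isOpen_iff_mem_nhds.2 fun q ⟨hq, hqS⟩ => ?_
  filter_upwards [lt_mem_nhds hq, blockIdx_eventually_eq hq] with p hp hpq
  exact ⟨hp, hpq ▸ hqS⟩

lemma inter_blockSet_mem_Bfam {X : Set ℚ} (hX : X ∈ Bfam) {S : Set ℕ}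
    (hS : (blockIdx '' X ∩ S).Infinite) : X ∩ blockSet S ∈ Bfam := by
  obtain ⟨hXpos, hXclosed, hXcrowded, -⟩ := hX
  have hcompl : X ∩ blockSet S = X ∩ (blockSet Sᶜ)ᶜ := by
    ext q
    simp only [blockSet, mem_inter_iff, mem_compl_iff, mem_ofPred_eq, not_and, not_not]
    exact ⟨fun ⟨hq, _, h⟩ => ⟨hq, fun _ => h⟩, fun ⟨hq, h⟩ => ⟨hq, hXpos hq, h (hXpos hq)⟩⟩
  refine ⟨inter_subset_left.trans hXpos, hcompl ▸ hXclosed.inter_isClosed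
    (isOpen_blockSet _).isClosed_compl, hXcrowded.inter_isOpen (isOpen_blockSet S), fun b => ?_⟩
  obtain ⟨N, hN⟩ := exists_nat_gt ((b : ℝ) / √2)
  obtain ⟨_, ⟨⟨x, hxX, rfl⟩, hxS⟩, hNx⟩ := hS.exists_gt N
  have hx := hXpos hxX
  refine ⟨x, ⟨hxX, hx, hxS⟩, ?_⟩
  have : (N : ℝ) * √2 ≤ blockIdx x * √2 := by gcongr
  exact_mod_cast ((div_lt_iff₀ (by positivity)).1 hN).trans_le
    (this.trans (blockIdx_mul_sqrt_two_le hx))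

lemma infinite_image_blockIdx {X : Set ℚ} (hX : X ∈ Bfam) : (blockIdx '' X).Infinite := by
  refine infinite_of_not_bddAbove fun ⟨N, hN⟩ => ?_
  obtain ⟨b, hb⟩ := exists_rat_gt (((N + 1 : ℕ) : ℝ) * √2)
  obtain ⟨x, hxX, hbx⟩ := hX.2.2.2 b
  have : N + 1 ≤ blockIdx x := le_blockIdx (hb.trans (by exact_mod_cast hbx)).le
  exact (hN (mem_image_of_mem _ hxX)).not_gt this

lemma reaps_image_blockIdx {X : Set ℚ} (hX : X ∈ Bfam) {Y : Set ℕ}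
    (hreap : ¬ MemPprime (X \ blockSet Y) ∨ ¬ MemPprime (X ∩ blockSet Y)) :
    (blockIdx '' X \ Y).Finite ∨ (blockIdx '' X ∩ Y).Finite := by
  refine hreap.imp (fun h => not_infinite.1 fun hinf => h ?_) (fun h => not_infinite.1 fun hinf => h ?_)
  · exact ⟨_, inter_blockSet_mem_Bfam hX hinf, fun q ⟨hqX, _, hqY⟩ => ⟨hqX, fun h' => hqY h'.2⟩⟩
  · exact ⟨_, inter_blockSet_mem_Bfam hX hinf, subset_rfl⟩

/-- 𝔯 ≤ 𝔯_P. -/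
theorem stmt13 : reapNumber ≤ rP := by
  refine le_csInf ⟨_, Bfam, rfl, subset_rfl, Bfam_reaps⟩ ?_
  rintro _ ⟨𝒳, rfl, h𝒳, hreap⟩
  refine (csInf_le' ?_).trans (Cardinal.mk_image_le (f := image blockIdx))
  refine ⟨_, rfl, ?_, fun Y => ?_⟩
  · rintro _ ⟨X, hX, rfl⟩
    exact infinite_image_blockIdx (h𝒳 hX)
  · obtain ⟨X, hX, hXY⟩ := hreap (blockSet Y)
    exact ⟨_, mem_image_of_mem _ hX, reaps_image_blockIdx (h𝒳 hX) hXY⟩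
end
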